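/- Let β¹, β², β³ ∈ Λ²V be 2-forms. There exists α ∈ V with α∧e^i = β^i for i = 1,2,3 if and only if β^i∧e^j + β^j∧e^i = 0 in Λ³V for all i, j ∈ {1,2,3}; and in that case the solution is unique and given by α = (1/2)·Σ_{i,j,k} ε_{ijk}·((β^i∧e^j)/w)·e^k. -/

import Mathlib

/-!
Write `α = ∑ₖ aₖ eᵏ`. Then `α ∧ eⁱ ∧ eʲ = (∑ₖ aₖ εₖᵢⱼ) w`, so `α` solves `α ∧ eⁱ = βⁱ` exactly when
`cᵢⱼ = ∑ₖ aₖ εₖᵢⱼ`, provided a 2-form is determined by its wedges with `e¹, e², e³`. That holds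
because `Λ²V` is spanned by the Hodge duals `⋆eᵏ = eᵏ⁺¹ ∧ eᵏ⁺²` and `⋆eᵏ ∧ eʲ = δₖⱼ w`. The
linear system `cᵢⱼ = ∑ₖ aₖ εₖᵢⱼ` is solvable iff `c` is antisymmetric, i.e.
`βⁱ ∧ eʲ + βʲ ∧ eⁱ = 0`, and then `aₖ = ½ ∑ᵢⱼ εᵢⱼₖ cᵢⱼ` by the contraction `∑ₖ εₖᵢⱼ εᵢ'ⱼ'ₖ = δᵢᵢ'δⱼⱼ' - δᵢⱼ'δⱼᵢ'`.
-/

open ExteriorAlgebra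

noncomputable section

/-- 3-index Levi-Civita symbol on `Fin 3`, normalized so that `ε₁₂₃ = 1`. -/
def lc3 (i j k : Fin 3) : ℝ :=
  ((j.val : ℝ) - (i.val : ℝ)) * ((k.val : ℝ) - (i.val : ℝ)) * ((k.val : ℝ) - (j.val : ℝ)) / 2

lemma Fin.eq_zero_or_eq_one_or_eq_two (m : Fin 3) : m = 0 ∨ m = 1 ∨ m = 2 := by
  fin_cases m <;> simp

lemma half_sum_lc3_mul_sum_lc3 (a : Fin 3 → ℝ) (k : Fin 3) :
    1 / 2 * ∑ i, ∑ j, lc3 i j k * ∑ l, a l * lc3 l i j = a k := by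
  fin_cases k <;> simp [Fin.sum_univ_three, lc3] <;> ring

lemma sum_half_sum_lc3_mul_lc3 (c : Fin 3 → Fin 3 → ℝ) (hc : ∀ i j, c i j + c j i = 0)
    (i j : Fin 3) : ∑ k, (1 / 2 * ∑ i', ∑ j', lc3 i' j' k * c i' j') * lc3 k i j = c i j := by
  have hdiag (i : Fin 3) : c i i = 0 := by linarith [hc i i]
  have h10 : c 1 0 = -c 0 1 := by linarith [hc 0 1]
  have h20 : c 2 0 = -c 0 2 := by linarith [hc 0 2]
  have h21 : c 2 1 = -c 1 2 := by linarith [hc 1 2]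
  fin_cases i <;> fin_cases j <;> simp [Fin.sum_univ_three, lc3, hdiag, h10, h20, h21] <;> ring

lemma half_smul_sum_lc3_smul {M : Type*} [AddCommGroup M] [Module ℝ M] (v : Fin 3 → M)
    (c : Fin 3 → Fin 3 → ℝ) :
    ((1 : ℝ) / 2) • ∑ i, ∑ j, ∑ k, (lc3 i j k * c i j) • v k =
      ∑ k, (1 / 2 * ∑ i, ∑ j, lc3 i j k * c i j) • v k := by
  simp only [Finset.mul_sum, Finset.sum_smul, Finset.smul_sum, smul_smul]
  conv_rhs => rw [Finset.sum_comm]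
  exact Finset.sum_congr rfl fun _ _ => Finset.sum_comm

namespace ExteriorAlgebra

section CommRing

variable {R M : Type*} [CommRing R] [AddCommGroup M] [Module R M]

lemma ι_mul_ι_swap (x y : M) : ι R y * ι R x = -(ι R x * ι R y) :=
  eq_neg_of_add_eq_zero_right (ι_add_mul_swap x y)

lemma ι_mul_ι_mul_swap (x y : M) (z : ExteriorAlgebra R M) :
    ι R y * (ι R x * z) = -(ι R x * (ι R y * z)) := by
  rw [← mul_assoc, ι_mul_ι_swap, neg_mul, mul_assoc]

lemma ι_mul_ι_mul_self (x : M) (z : ExteriorAlgebra R M) : ι R x * (ι R x * z) = 0 := by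
  rw [← mul_assoc, ι_sq_zero, zero_mul]

end CommRing

variable {V : Type*} [AddCommGroup V] [Module ℝ V] (b : Module.Basis (Fin 3) ℝ V)

def volumeForm : ExteriorAlgebra ℝ V := ι ℝ (b 0) * ι ℝ (b 1) * ι ℝ (b 2)

lemma volumeForm_ne_zero : volumeForm b ≠ 0 := by
  intro h
  have hw : ιMulti ℝ 3 (fun i => b i) = volumeForm b := by
    rw [ιMulti_apply]
    simp [List.ofFn_succ, volumeForm, mul_assoc]
  let det : ∀ n, V [⋀^Fin n]→ₗ[ℝ] ℝ
    | 3 => b.det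
    | _ => 0
  have h1 := congrArg (liftAlternating det) (hw.trans h)
  rw [liftAlternating_apply_ιMulti, map_zero] at h1
  exact one_ne_zero (b.det_self.symm.trans h1)

def hodgeDual : Fin 3 → ExteriorAlgebra ℝ V :=
  ![ι ℝ (b 1) * ι ℝ (b 2), ι ℝ (b 2) * ι ℝ (b 0), ι ℝ (b 0) * ι ℝ (b 1)]

lemma ι_basis_mul_ι_basis (i j : Fin 3) :
    ι ℝ (b i) * ι ℝ (b j) = ∑ k, lc3 i j k • hodgeDual b k := by
  rcases i.eq_zero_or_eq_one_or_eq_two with rfl | rfl | rfl <;>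
    rcases j.eq_zero_or_eq_one_or_eq_two with rfl | rfl | rfl <;>
    simp [Fin.sum_univ_three, lc3, hodgeDual, ι_mul_ι_swap (b 0) (b 1),
      ι_mul_ι_swap (b 0) (b 2), ι_mul_ι_swap (b 1) (b 2)] <;> norm_num

lemma hodgeDual_mul_ι_basis (k j : Fin 3) :
    hodgeDual b k * ι ℝ (b j) = if k = j then volumeForm b else 0 := by
  rcases k.eq_zero_or_eq_one_or_eq_two with rfl | rfl | rfl <;>
    rcases j.eq_zero_or_eq_one_or_eq_two with rfl | rfl | rfl <;>
    simp [hodgeDual, volumeForm, mul_assoc, ι_mul_ι_mul_self, ι_mul_ι_mul_swap (b 0) (b 1),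
      ι_mul_ι_swap (b 0) (b 1), ι_mul_ι_swap (b 0) (b 2), ι_mul_ι_swap (b 1) (b 2)]

lemma ι_basis_mul_ι_basis_mul_ι_basis (i j k : Fin 3) :
    ι ℝ (b i) * ι ℝ (b j) * ι ℝ (b k) = lc3 i j k • volumeForm b := by
  simp [ι_basis_mul_ι_basis, Finset.sum_mul, hodgeDual_mul_ι_basis]

lemma ι_mul_ι_basis_mul_ι_basis (α : V) (i j : Fin 3) :
    ι ℝ α * ι ℝ (b i) * ι ℝ (b j) = (∑ k, b.repr α k * lc3 k i j) • volumeForm b := by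
  conv_lhs => rw [← b.sum_repr α]
  simp only [map_sum, map_smul, Finset.sum_mul, smul_mul_assoc, ι_basis_mul_ι_basis_mul_ι_basis,
    smul_smul, Finset.sum_smul]

lemma mem_span_hodgeDual {γ : ExteriorAlgebra ℝ V}
    (hγ : γ ∈ LinearMap.range (ι ℝ : V →ₗ[ℝ] ExteriorAlgebra ℝ V) ^ 2) :
    γ ∈ Submodule.span ℝ (Set.range (hodgeDual b)) := by
  rw [pow_two] at hγ
  refine Submodule.mul_le.mpr ?_ hγ
  rintro _ ⟨x, rfl⟩ _ ⟨y, rfl⟩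
  have hpair (i j : Fin 3) :
      ι ℝ (b i) * ι ℝ (b j) ∈ Submodule.span ℝ (Set.range (hodgeDual b)) := by
    rw [ι_basis_mul_ι_basis]
    exact Submodule.sum_mem _ fun k _ => Submodule.smul_mem _ _ (Submodule.subset_span ⟨k, rfl⟩)
  rw [← b.sum_repr x, ← b.sum_repr y]
  simp only [map_sum, map_smul, Finset.sum_mul, Finset.mul_sum, smul_mul_assoc, mul_smul_comm]
  exact Submodule.sum_mem _ fun _ _ => Submodule.smul_mem _ _ <|
    Submodule.sum_mem _ fun _ _ => Submodule.smul_mem _ _ <| hpair _ _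

lemma eq_zero_of_mul_ι_basis_eq_zero {γ : ExteriorAlgebra ℝ V}
    (hγ : γ ∈ LinearMap.range (ι ℝ : V →ₗ[ℝ] ExteriorAlgebra ℝ V) ^ 2)
    (h : ∀ j, γ * ι ℝ (b j) = 0) : γ = 0 := by
  obtain ⟨B, rfl⟩ := (Submodule.mem_span_range_iff_exists_fun ℝ).mp (mem_span_hodgeDual b hγ)
  have hB (j : Fin 3) : B j = 0 := by
    have hj := h j
    simp only [Finset.sum_mul, smul_mul_assoc, hodgeDual_mul_ι_basis, smul_ite, smul_zero,
      Finset.sum_ite_eq', Finset.mem_univ, if_true] at hj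
    exact (smul_eq_zero.mp hj).resolve_right (volumeForm_ne_zero b)
  simp [hB]

lemma ι_mul_ι_basis_eq_iff (β : Fin 3 → ExteriorAlgebra ℝ V)
    (hβ : ∀ i, β i ∈ LinearMap.range (ι ℝ : V →ₗ[ℝ] ExteriorAlgebra ℝ V) ^ 2)
    (c : Fin 3 → Fin 3 → ℝ) (hc : ∀ i j, β i * ι ℝ (b j) = c i j • volumeForm b) (α : V) :
    (∀ i, ι ℝ α * ι ℝ (b i) = β i) ↔ ∀ i j, ∑ k, b.repr α k * lc3 k i j = c i j := by
  constructor
  · intro hα i j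
    apply smul_left_injective ℝ (volumeForm_ne_zero b)
    simp only [← ι_mul_ι_basis_mul_ι_basis, hα, hc]
  · intro hα i
    rw [← sub_eq_zero]
    refine eq_zero_of_mul_ι_basis_eq_zero b (Submodule.sub_mem _ ?_ (hβ i)) fun j => ?_
    · rw [pow_two]
      exact Submodule.mul_mem_mul (LinearMap.mem_range_self _ _) (LinearMap.mem_range_self _ _)
    · rw [sub_mul, ι_mul_ι_basis_mul_ι_basis, hα, hc, sub_self]

end ExteriorAlgebra

/-- given 2-forms `β¹,β²,β³ ∈ Λ²V` (with `c i j = ((β^i∧e^j)/w)`), there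
exists `α ∈ V` with `α∧e^i = β^i` for `i = 1,2,3` if and only if
`β^i∧e^j + β^j∧e^i = 0` for all `i,j`; and in that case the solution is unique, given by
`α = (1/2)·Σ_{i,j,k} ε_{ijk}·((β^i∧e^j)/w)·e^k`. -/
theorem stmt_6 (V : Type*) [AddCommGroup V] [Module ℝ V] (b : Module.Basis (Fin 3) ℝ V)
    (β : Fin 3 → ExteriorAlgebra ℝ V)
    (hβ : ∀ i : Fin 3, β i ∈
      (LinearMap.range (ExteriorAlgebra.ι ℝ : V →ₗ[ℝ] ExteriorAlgebra ℝ V) ^ 2 :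
        Submodule ℝ (ExteriorAlgebra ℝ V)))
    (c : Fin 3 → Fin 3 → ℝ)
    (hc : ∀ i j : Fin 3, β i * ExteriorAlgebra.ι ℝ (b j) =
      c i j • (ExteriorAlgebra.ι ℝ (b 0) * ExteriorAlgebra.ι ℝ (b 1) * ExteriorAlgebra.ι ℝ (b 2))) :
    ((∃ α : V, ∀ i : Fin 3, ExteriorAlgebra.ι ℝ α * ExteriorAlgebra.ι ℝ (b i) = β i) ↔
      (∀ i j : Fin 3, β i * ExteriorAlgebra.ι ℝ (b j) + β j * ExteriorAlgebra.ι ℝ (b i) = 0)) ∧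
    (∀ α : V, (∀ i : Fin 3, ExteriorAlgebra.ι ℝ α * ExteriorAlgebra.ι ℝ (b i) = β i) →
      α = ((1 : ℝ) / 2) • ∑ i : Fin 3, ∑ j : Fin 3, ∑ k : Fin 3, (lc3 i j k * c i j) • b k) := by
  have hc' : ∀ i j, β i * ι ℝ (b j) = c i j • volumeForm b := hc
  have hsolves := ι_mul_ι_basis_eq_iff b β hβ c hc'
  have hanti : (∀ i j, β i * ι ℝ (b j) + β j * ι ℝ (b i) = 0) ↔ ∀ i j, c i j + c j i = 0 := by
    simp only [hc', ← add_smul, smul_eq_zero, volumeForm_ne_zero b, or_false]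
  refine ⟨⟨?_, fun h => ?_⟩, fun α hα => ?_⟩
  · rintro ⟨α, hα⟩ i j
    rw [← hα i, ← hα j, mul_assoc, mul_assoc, ← mul_add, ι_add_mul_swap, mul_zero]
  · refine ⟨∑ k, (1 / 2 * ∑ i, ∑ j, lc3 i j k * c i j) • b k, (hsolves _).2 ?_⟩
    rw [b.repr_sum_self]
    exact sum_half_sum_lc3_mul_lc3 c (hanti.1 h)
  · rw [half_smul_sum_lc3_smul]
    conv_lhs => rw [← b.sum_repr α]
    refine Finset.sum_congr rfl fun k _ => congrArg (· • b k) ?_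
    simpa only [(hsolves α).1 hα] using (half_sum_lc3_mul_sum_lc3 (b.repr α) k).symm

end
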